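/- arXiv:math/0402292 — 2 statements merged into one kernel-verified Lean document; each statement's English description precedes it below -/
import Mathlib

section
/- If Δ is a differential operator of order ≤ N on a commutative unital algebra A, then the top bracket {a₁,…,a_N} := [···[Δ, L_{a₁}],···, L_{a_N}](1) is a derivation in each of its arguments (i.e., a multi-derivation). -/
variable (k : Type) [Field k] (A : Type) [CommRing A] [Algebra k A]

/-- The operator of multiplication by `a`. -/
def lmul (a : A) : Module.End k A := LinearMap.mulLeft k a

/-- The commutator of operators. -/
def cbr (X Y : Module.End k A) : Module.End k A := X * Y - Y * X

/-- Iterated commutators `[⋯[[Δ, L_{a₁}], L_{a₂}]⋯, L_{aₙ}]` along a list of elements. -/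
def cfold (Δ : Module.End k A) (l : List A) : Module.End k A :=
  l.foldl (fun X a => cbr k A X (lmul k A a)) Δ

/-- The `n`-ary Koszul bracket `{a₁,…,aₙ} := [⋯[[Δ, L_{a₁}], L_{a₂}]⋯, L_{aₙ}](1)`. -/
def kbr (Δ : Module.End k A) (l : List A) : A := cfold k A Δ l 1

/-- `Δ` is a differential operator of order `≤ n` in the Grothendieck sense. -/
def OrdLE (Δ : Module.End k A) (n : ℕ) : Prop :=
  ∀ l : List A, l.length = n + 1 → cfold k A Δ l = 0

lemma lmul_comm (a b : A) : lmul k A a * lmul k A b = lmul k A b * lmul k A a := by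
  ext x; simp [lmul, mul_comm, mul_left_comm]

lemma cbr_rc (X : Module.End k A) (a b : A) :
    cbr k A (cbr k A X (lmul k A a)) (lmul k A b)
      = cbr k A (cbr k A X (lmul k A b)) (lmul k A a) := by
  ext x
  simp only [cbr, lmul, LinearMap.sub_apply, Module.End.mul_apply, LinearMap.mulLeft_apply,
    map_sub, map_mul]
  ring_nf

lemma cfold_perm (Δ : Module.End k A) {l l' : List A} (h : l.Perm l') :
    cfold k A Δ l = cfold k A Δ l' := by
  have : RightCommutative (fun X a => cbr k A X (lmul k A a)) :=
    ⟨fun X a b => cbr_rc k A X a b⟩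
  exact h.foldl_eq Δ

lemma cfold_append (Δ : Module.End k A) (l l' : List A) :
    cfold k A Δ (l ++ l') = cfold k A (cfold k A Δ l) l' :=
  List.foldl_append ..

theorem stmt4 (Δ : Module.End k A) (N : ℕ) (hN : 1 ≤ N) (hord : OrdLE k A Δ N)
    (l₁ l₂ : List A) (hlen : l₁.length + l₂.length = N - 1) (b c : A) :
    kbr k A Δ (l₁ ++ (b * c) :: l₂) =
      kbr k A Δ (l₁ ++ b :: l₂) * c + b * kbr k A Δ (l₁ ++ c :: l₂) := by
  set D := cfold k A Δ (l₁ ++ l₂) with hD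
  have key : ∀ x : A, kbr k A Δ (l₁ ++ x :: l₂) = cbr k A D (lmul k A x) 1 := by
    intro x
    have hp : (l₁ ++ x :: l₂).Perm ((l₁ ++ l₂) ++ [x]) := by
      rw [List.append_assoc]
      exact List.Perm.append_left l₁ (List.perm_append_singleton x l₂).symm
    rw [kbr, cfold_perm k A Δ hp, cfold_append]
    rfl
  have h0 : cfold k A Δ ((l₁ ++ l₂) ++ [b, c]) = 0 := by
    apply hord
    simp only [List.length_append, List.length_cons, List.length_nil]
    omega
  rw [cfold_append] at h0
  have h1 : cbr k A (cbr k A D (lmul k A b)) (lmul k A c) = 0 := h0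
  have h2 := congrArg (fun F : Module.End k A => F 1) h1
  simp only [cbr, lmul, LinearMap.sub_apply, Module.End.mul_apply,
    LinearMap.mulLeft_apply, LinearMap.zero_apply, mul_one] at h2 ⊢
  rw [key, key, key]
  simp only [cbr, lmul, LinearMap.sub_apply, Module.End.mul_apply,
    LinearMap.mulLeft_apply, mul_one]
  ring_nf
  ring_nf at h2
  linear_combination h2
end

section
/- In the setting of higher derived brackets (Lie superalgebra 𝔤, projector P with im P abelian and ker P a subalgebra, odd element Δ), if Δ² = 0 then the derived brackets {a₁,…,aₙ}_Δ := P[···[[Δ,a₁],···],aₙ] endow V = im P with the structure of an L∞-algebra: all higher Jacobi identities Jⁿ = 0 hold. -/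
open scoped Classical

/-- The Koszul sign `(-1)^{pq}` for parities `p q : ZMod 2`. -/
def ksign (p q : ZMod 2) : ℤ := if p = 1 ∧ q = 1 then -1 else 1

/-- A Lie superalgebra over `k`: a `ZMod 2`-graded module with a bilinear bracket
that is graded-antisymmetric and satisfies the graded Jacobi identity
(on homogeneous elements). -/
structure LieSuper (k G : Type) [Field k] [AddCommGroup G] [Module k G] where
  gr : ZMod 2 → Submodule k G
  br : G →ₗ[k] G →ₗ[k] G
  br_gr : ∀ i j x y, x ∈ gr i → y ∈ gr j → br x y ∈ gr (i + j)
  skew : ∀ i j x y, x ∈ gr i → y ∈ gr j → br x y = -(ksign i j • br y x)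
  jacobi : ∀ i j x y z, x ∈ gr i → y ∈ gr j →
    br x (br y z) = br (br x y) z + ksign i j • br y (br x z)

variable {k G : Type} [Field k] [AddCommGroup G] [Module k G]

/-- The `n`-th derived bracket `{a₁,…,aₙ}_D := P[⋯[[D,a₁],a₂],⋯,aₙ]`. -/
def dbr (L : LieSuper k G) (P : G →ₗ[k] G) (D : G) (l : List G) : G :=
  P (l.foldl (fun x a => L.br x a) D)

/-- `σ` is a `(j, n-j)`-shuffle: strictly monotone on the first `j` positions
and on the last `n - j` positions. -/
def IsShuffle {n : ℕ} (j : ℕ) (σ : Equiv.Perm (Fin n)) : Prop :=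
  (∀ s t : Fin n, s < t → (t : ℕ) < j → σ s < σ t) ∧
  (∀ s t : Fin n, s < t → j ≤ (s : ℕ) → σ s < σ t)

/-- The Koszul sign of the permutation `σ` of homogeneous arguments of parities `p`:
the product of `(-1)^{p_i p_j}` over all inversions of `σ`. -/
noncomputable def koszulSign {n : ℕ} (p : Fin n → ZMod 2) (σ : Equiv.Perm (Fin n)) : ℤ :=
  ∏ q ∈ Finset.univ.filter (fun q : Fin n × Fin n => q.1 < q.2 ∧ σ q.2 < σ q.1),
    ksign (p (σ q.1)) (p (σ q.2))

/-- The `n`-th Jacobiator of the derived brackets of `D`: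
`Jⁿ(a₁,…,aₙ) = Σ_{j+l=n} Σ_{(j,l)-shuffles σ} ± {{a_{σ(1)},…,a_{σ(j)}}_D, a_{σ(j+1)},…,a_{σ(n)}}_D`
with Koszul signs. -/
noncomputable def jacobiator (L : LieSuper k G) (P : G →ₗ[k] G) (D : G) {n : ℕ}
    (p : Fin n → ZMod 2) (a : Fin n → G) : G :=
  ∑ j ∈ Finset.range (n + 1),
    ∑ σ ∈ Finset.univ.filter (fun σ : Equiv.Perm (Fin n) => IsShuffle j σ),
      koszulSign p σ •
        dbr L P D
          (dbr L P D (((List.finRange n).take j).map fun i => a (σ i)) ::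
            ((List.finRange n).drop j).map fun i => a (σ i))

/-!
Write `X_S = [⋯[[D, a_{i₁}], a_{i₂}], ⋯, a_{iₘ}]` for `S = {i₁ < ⋯ < iₘ}` and split
`X_S = u_S + v_S` with `u_S = P X_S ∈ im P` and `v_S ∈ ker P`. The `(j, n - j)`-shuffles
correspond to the `j`-element subsets `S`, and since `u_S` and the `aᵢ` lie in the abelian
subalgebra `im P`, `u_S` can be pulled out of the outer derived bracket: the term of `Jⁿ`
indexed by `S` is `± P[v_{Sᶜ}, u_S]`. Summing it once reindexed by `S ↦ Sᶜ` and once after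
graded antisymmetry gives `Jⁿ = Σ_S ε_S P[v_S, u_{Sᶜ}] = Σ_S ε_S P[u_S, v_{Sᶜ}]`, with the
signs `ε_S` of the Leibniz expansion `0 = [⋯[[D, D], a₁], ⋯, aₙ] = Σ_S ε_S [X_S, X_{Sᶜ}]`.
Under `P` the parts `[u_S, u_{Sᶜ}]` (im P abelian) and `[v_S, v_{Sᶜ}]` (ker P a subalgebra)
of `[X_S, X_{Sᶜ}]` vanish, so `2 Jⁿ = 0`.
-/

theorem ksign_comm (p q : ZMod 2) : ksign p q = ksign q p := by decide +revert

theorem ksign_zero_left (p : ZMod 2) : ksign 0 p = 1 := by decide +revert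

theorem ksign_add_left (p q r : ZMod 2) : ksign (p + q) r = ksign p r * ksign q r := by
  decide +revert

theorem ksign_add_right (p q r : ZMod 2) : ksign p (q + r) = ksign p q * ksign p r := by
  decide +revert

theorem ksign_mul_self (p q : ZMod 2) : ksign p q * ksign p q = 1 := by decide +revert

theorem ksign_mul_ksign_add (i j q : ZMod 2) : ksign i j * ksign j (i + q) = ksign q j := by
  decide +revert

theorem ksign_sum_left {ι : Type*} (s : Finset ι) (f : ι → ZMod 2) (q : ZMod 2) :
    ksign (∑ i ∈ s, f i) q = ∏ i ∈ s, ksign (f i) q := by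
  induction s using Finset.cons_induction with
  | empty => exact ksign_zero_left q
  | cons i s hi ih => rw [Finset.sum_cons, Finset.prod_cons, ksign_add_left, ih]

theorem ksign_sum_right {ι : Type*} (s : Finset ι) (p : ZMod 2) (f : ι → ZMod 2) :
    ksign p (∑ i ∈ s, f i) = ∏ i ∈ s, ksign p (f i) := by
  simp only [ksign_comm p, ksign_sum_left]

section Subsets

variable {n : ℕ}

def ascList (S : Finset (Fin n)) : List (Fin n) := (List.finRange n).filter (· ∈ S)

@[simp] theorem mem_ascList {S : Finset (Fin n)} {i : Fin n} : i ∈ ascList S ↔ i ∈ S := by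
  simp [ascList]

theorem pairwise_lt_ascList (S : Finset (Fin n)) : (ascList S).Pairwise (· < ·) :=
  (List.pairwise_lt_finRange n).filter _

theorem toFinset_ascList (S : Finset (Fin n)) : (ascList S).toFinset = S := by
  ext i
  simp

theorem length_ascList (S : Finset (Fin n)) : (ascList S).length = S.card := by
  rw [← List.toFinset_card_of_nodup (pairwise_lt_ascList S).nodup, toFinset_ascList]

theorem sum_map_ascList {M : Type*} [AddCommMonoid M] (S : Finset (Fin n)) (f : Fin n → M) :
    ((ascList S).map f).sum = ∑ i ∈ S, f i := by
  rw [← List.sum_toFinset f (pairwise_lt_ascList S).nodup, toFinset_ascList]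

theorem ascList_insert_zero (S : Finset (Fin n)) :
    ascList (insert 0 (S.map (Fin.succEmb n))) = 0 :: (ascList S).map Fin.succ := by
  simp [ascList, List.finRange_succ, List.filter_map, Function.comp_def, Fin.succ_ne_zero]

theorem ascList_map_succEmb (S : Finset (Fin n)) :
    ascList (S.map (Fin.succEmb n)) = (ascList S).map Fin.succ := by
  simp [ascList, List.finRange_succ, List.filter_map, Function.comp_def, Fin.succ_ne_zero]

theorem compl_insert_zero_map_succEmb (S : Finset (Fin n)) :
    (insert 0 (S.map (Fin.succEmb n)))ᶜ = Sᶜ.map (Fin.succEmb n) := by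
  ext i
  cases i using Fin.cases <;> simp [Fin.succ_ne_zero]

theorem compl_map_succEmb (S : Finset (Fin n)) :
    (S.map (Fin.succEmb n))ᶜ = insert 0 (Sᶜ.map (Fin.succEmb n)) := by
  ext i
  cases i using Fin.cases <;> simp [Fin.succ_ne_zero]

theorem sum_finset_fin_succ {M : Type*} [AddCommMonoid M] (f : Finset (Fin (n + 1)) → M) :
    ∑ S, f S = ∑ S : Finset (Fin n), f (insert 0 (S.map (Fin.succEmb n)))
      + ∑ S : Finset (Fin n), f (S.map (Fin.succEmb n)) := by
  rw [← Finset.powerset_univ, Fin.univ_succ, Finset.cons_eq_insert,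
    Finset.sum_powerset_insert (by simp [Fin.succ_ne_zero]), add_comm, Finset.map_eq_image,
    Finset.powerset_image, Finset.sum_image, Finset.sum_image, Finset.powerset_univ]
  · simp only [Finset.map_eq_image]
    rfl
  all_goals exact fun _ _ _ _ h => Finset.image_injective (Fin.succ_injective n) h

def shuffleSign (p : Fin n → ZMod 2) (S : Finset (Fin n)) : ℤ :=
  ∏ i ∈ S, ∏ j ∈ Sᶜ with j < i, ksign (p i) (p j)

theorem shuffleSign_insert_zero (p : Fin (n + 1) → ZMod 2) (S : Finset (Fin n)) :
    shuffleSign p (insert 0 (S.map (Fin.succEmb n))) = shuffleSign (fun i => p i.succ) S := by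
  rw [shuffleSign, Finset.prod_insert (by simp [Fin.succ_ne_zero]), compl_insert_zero_map_succEmb]
  simp [shuffleSign, Finset.filter_map, Finset.prod_map, Function.comp_def]

theorem shuffleSign_map_succEmb (p : Fin (n + 1) → ZMod 2) (S : Finset (Fin n)) :
    shuffleSign p (S.map (Fin.succEmb n))
      = ksign (∑ i ∈ S, p i.succ) (p 0) * shuffleSign (fun i => p i.succ) S := by
  rw [shuffleSign, compl_map_succEmb, shuffleSign, ksign_sum_left, ← Finset.prod_mul_distrib]
  simp [Finset.filter_insert, Finset.filter_map, Finset.prod_map, Function.comp_def, Fin.succ_pos]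

theorem shuffleSign_mul_self (p : Fin n → ZMod 2) (S : Finset (Fin n)) :
    shuffleSign p S * shuffleSign p S = 1 := by
  simp only [shuffleSign, ← Finset.prod_mul_distrib, ksign_mul_self, Finset.prod_const_one]

theorem shuffleSign_mul_shuffleSign_compl (p : Fin n → ZMod 2) (S : Finset (Fin n)) :
    shuffleSign p S * shuffleSign p Sᶜ = ksign (∑ i ∈ S, p i) (∑ i ∈ Sᶜ, p i) := by
  have hcompl : shuffleSign p Sᶜ = ∏ i ∈ S, ∏ j ∈ Sᶜ with i < j, ksign (p i) (p j) := by
    rw [shuffleSign, compl_compl, Finset.prod_comm' (t' := S) (s' := fun i => {j ∈ Sᶜ | i < j})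
      (by intro j i; simp only [Finset.mem_filter]; tauto)]
    exact Finset.prod_congr rfl fun _ _ => Finset.prod_congr rfl fun _ _ => ksign_comm _ _
  rw [hcompl, shuffleSign, ← Finset.prod_mul_distrib, ksign_sum_left]
  refine Finset.prod_congr rfl fun i hi => ?_
  rw [ksign_sum_right, ← Finset.prod_filter_mul_prod_filter_not Sᶜ (· < i)]
  congr 1
  refine Finset.prod_congr (Finset.filter_congr fun j hj => ?_) fun _ _ => rfl
  have hji : j ≠ i := fun h => Finset.mem_compl.mp hj (h ▸ hi)
  exact ⟨fun h => not_lt.mpr h.le, fun h => lt_of_le_of_ne (not_lt.mp h) hji.symm⟩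

end Subsets

section Shuffles

variable {n : ℕ}

theorem length_ascList_append_compl (S : Finset (Fin n)) :
    (ascList S ++ ascList Sᶜ).length = n := by
  rw [List.length_append, length_ascList, length_ascList, Finset.card_add_card_compl,
    Fintype.card_fin]

theorem nodup_ascList_append_compl (S : Finset (Fin n)) : (ascList S ++ ascList Sᶜ).Nodup :=
  List.nodup_append.mpr ⟨(pairwise_lt_ascList S).nodup, (pairwise_lt_ascList Sᶜ).nodup,
    fun x hx y hy hxy => by simp_all⟩

/-- The `(|S|, n - |S|)`-shuffle listing first the elements of `S`, then those of `Sᶜ`,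
each in increasing order. -/
noncomputable def unshuffle (S : Finset (Fin n)) : Equiv.Perm (Fin n) :=
  Equiv.ofBijective
    (fun i => (ascList S ++ ascList Sᶜ)[(i : ℕ)]'((length_ascList_append_compl S).symm ▸ i.2))
    (Finite.injective_iff_bijective.mp fun _ _ h =>
      Fin.ext ((nodup_ascList_append_compl S).getElem_inj_iff.mp h))

theorem ofFn_unshuffle (S : Finset (Fin n)) :
    List.ofFn (unshuffle S) = ascList S ++ ascList Sᶜ :=
  List.ext_getElem (by rw [List.length_ofFn, length_ascList_append_compl])
    fun _ _ _ => by simp [unshuffle]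

theorem unshuffle_apply_of_lt (S : Finset (Fin n)) {i : Fin n} (hi : (i : ℕ) < S.card) :
    unshuffle S i = (ascList S)[(i : ℕ)]'(by rwa [length_ascList]) :=
  List.getElem_append_left _

theorem unshuffle_apply_of_le (S : Finset (Fin n)) {i : Fin n} (hi : S.card ≤ (i : ℕ)) :
    unshuffle S i = (ascList Sᶜ)[(i : ℕ) - S.card]'(by
      have := length_ascList_append_compl S
      rw [List.length_append, length_ascList] at this
      omega) :=
  (List.getElem_append_right (by rwa [length_ascList])).trans (by simp only [length_ascList])

theorem unshuffle_apply_mem_iff (S : Finset (Fin n)) (i : Fin n) :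
    unshuffle S i ∈ S ↔ (i : ℕ) < S.card := by
  by_cases hi : (i : ℕ) < S.card
  · simpa [hi, unshuffle_apply_of_lt S hi] using
      (mem_ascList (S := S)).mp (List.getElem_mem _)
  · simpa [hi, unshuffle_apply_of_le S (not_lt.mp hi)] using
      (mem_ascList (S := Sᶜ)).mp (List.getElem_mem _)

theorem isShuffle_unshuffle (S : Finset (Fin n)) : IsShuffle S.card (unshuffle S) := by
  refine ⟨fun s t hst ht => ?_, fun s t hst hs => ?_⟩
  · rw [unshuffle_apply_of_lt S ht, unshuffle_apply_of_lt S (lt_trans hst ht)]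
    exact List.pairwise_iff_getElem.mp (pairwise_lt_ascList S) _ _ _ _ hst
  · have hst' : (s : ℕ) < t := hst
    rw [unshuffle_apply_of_le S hs, unshuffle_apply_of_le S (by omega)]
    exact List.pairwise_iff_getElem.mp (pairwise_lt_ascList Sᶜ) _ _ _ _ (by omega)

theorem map_take_unshuffle {α : Type*} (S : Finset (Fin n)) (a : Fin n → α) :
    ((List.finRange n).take S.card).map (fun i => a (unshuffle S i)) = (ascList S).map a := by
  rw [List.map_take, ← Function.comp_def a, ← List.map_map, ← List.ofFn_eq_map, ofFn_unshuffle,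
    List.map_append, List.take_left' (by rw [List.length_map, length_ascList])]

theorem map_drop_unshuffle {α : Type*} (S : Finset (Fin n)) (a : Fin n → α) :
    ((List.finRange n).drop S.card).map (fun i => a (unshuffle S i)) = (ascList Sᶜ).map a := by
  rw [List.map_drop, ← Function.comp_def a, ← List.map_map, ← List.ofFn_eq_map, ofFn_unshuffle,
    List.map_append, List.drop_left' (by rw [List.length_map, length_ascList])]

def firstBlock (σ : Equiv.Perm (Fin n)) (j : ℕ) : Finset (Fin n) :=
  {x | (σ.symm x : ℕ) < j}

theorem card_firstBlock (σ : Equiv.Perm (Fin n)) {j : ℕ} (hj : j ≤ n) :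
    (firstBlock σ j).card = j := by
  rw [Finset.card_equiv σ.symm (t := ({i | (i : ℕ) < j} : Finset (Fin n))) (by simp [firstBlock]),
    Fin.card_filter_val_lt, min_eq_right hj]

theorem firstBlock_unshuffle (S : Finset (Fin n)) : firstBlock (unshuffle S) S.card = S := by
  ext x
  rw [firstBlock, Finset.mem_filter, ← unshuffle_apply_mem_iff, Equiv.apply_symm_apply]
  simp

theorem take_ofFn_of_isShuffle {j : ℕ} {σ : Equiv.Perm (Fin n)} (hσ : IsShuffle j σ) :
    (List.ofFn σ).take j = ascList (firstBlock σ j) := by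
  refine List.Pairwise.eq_of_mem_iff ?_ (pairwise_lt_ascList _) fun x => ?_
  · refine List.pairwise_iff_getElem.mpr fun s t _ ht hst => ?_
    simp only [List.length_take, List.length_ofFn] at ht
    simp only [List.getElem_take, List.getElem_ofFn]
    exact hσ.1 _ _ hst (by simp; omega)
  · simp only [mem_ascList, firstBlock, Finset.mem_filter, Finset.mem_univ, true_and,
      List.mem_take_iff_getElem, List.getElem_ofFn, List.length_ofFn]
    constructor
    · rintro ⟨s, hs, rfl⟩
      simpa using (lt_min_iff.mp hs).1
    · exact fun hx => ⟨_, lt_min hx (σ.symm x).2, by simp⟩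

theorem drop_ofFn_of_isShuffle {j : ℕ} {σ : Equiv.Perm (Fin n)} (hσ : IsShuffle j σ) :
    (List.ofFn σ).drop j = ascList (firstBlock σ j)ᶜ := by
  refine List.Pairwise.eq_of_mem_iff ?_ (pairwise_lt_ascList _) fun x => ?_
  · refine List.pairwise_iff_getElem.mpr fun s t _ _ hst => ?_
    simp only [List.getElem_drop, List.getElem_ofFn]
    exact hσ.2 _ _ (by simp; omega) (by simp)
  · simp only [mem_ascList, firstBlock, Finset.mem_compl, Finset.mem_filter, Finset.mem_univ,
      true_and, not_lt, List.mem_drop_iff_getElem, List.getElem_ofFn, List.length_ofFn]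
    constructor
    · rintro ⟨s, hs, rfl⟩
      simp
    · exact fun hx => ⟨(σ.symm x : ℕ) - j, by omega, by simp [Nat.add_sub_cancel' hx]⟩

theorem unshuffle_firstBlock {j : ℕ} {σ : Equiv.Perm (Fin n)} (hσ : IsShuffle j σ) :
    unshuffle (firstBlock σ j) = σ := by
  apply Equiv.coe_fn_injective
  apply List.ofFn_injective
  rw [ofFn_unshuffle, ← take_ofFn_of_isShuffle hσ, ← drop_ofFn_of_isShuffle hσ,
    List.take_append_drop]

theorem koszulSign_unshuffle (p : Fin n → ZMod 2) (S : Finset (Fin n)) :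
    koszulSign p (unshuffle S) = shuffleSign p S := by
  have hinv : ∀ q : Fin n × Fin n, q.1 < q.2 ∧ unshuffle S q.2 < unshuffle S q.1 ↔
      (unshuffle S q.1 ∈ S ∧ unshuffle S q.2 ∈ Sᶜ) ∧ unshuffle S q.2 < unshuffle S q.1 := by
    rintro ⟨s, t⟩
    have hshuf := isShuffle_unshuffle S
    simp only [Finset.mem_compl, unshuffle_apply_mem_iff, Fin.lt_def]
    constructor
    · rintro ⟨hst, hinv⟩
      refine ⟨⟨?_, fun ht => ?_⟩, hinv⟩
      · by_contra hs
        exact lt_asymm hinv (hshuf.2 s t hst (not_lt.mp hs))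
      · exact lt_asymm hinv (hshuf.1 s t hst ht)
    · rintro ⟨⟨hs, ht⟩, hinv⟩
      exact ⟨by omega, hinv⟩
  refine (Finset.prod_equiv (Equiv.prodCongr (unshuffle S) (unshuffle S))
    (t := (S ×ˢ Sᶜ).filter fun x => x.2 < x.1) (g := fun x => ksign (p x.1) (p x.2))
    (by simpa using hinv) fun _ _ => rfl).trans ?_
  rw [shuffleSign, Finset.prod_filter, Finset.prod_product]
  simp only [Finset.prod_filter]

theorem jacobiator_eq_sum_shuffleSign (L : LieSuper k G) (P : G →ₗ[k] G) (D : G)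
    (p : Fin n → ZMod 2) (a : Fin n → G) :
    jacobiator L P D p a = ∑ S, shuffleSign p S •
      dbr L P D (dbr L P D ((ascList S).map a) :: (ascList Sᶜ).map a) := by
  rw [jacobiator, ← Finset.sum_fiberwise_of_maps_to (g := Finset.card) (t := Finset.range (n + 1))
    fun S _ => Finset.mem_range.mpr (Nat.lt_succ_of_le (card_finset_fin_le S))]
  refine Finset.sum_congr rfl fun j hj => ?_
  have hjn : j ≤ n := Nat.lt_succ_iff.mp (Finset.mem_range.mp hj)
  refine Finset.sum_nbij' (fun σ => firstBlock σ j) unshuffle (fun σ _ => ?_) (fun S hS => ?_)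
    (fun σ hσ => ?_) (fun S hS => ?_) (fun σ hσ => ?_)
  · simp [card_firstBlock σ hjn]
  · simp only [Finset.mem_filter, Finset.mem_univ, true_and] at hS ⊢
    exact hS ▸ isShuffle_unshuffle S
  · simp only [Finset.mem_filter, Finset.mem_univ, true_and] at hσ
    exact unshuffle_firstBlock hσ
  · simp only [Finset.mem_filter, Finset.mem_univ, true_and] at hS
    exact hS ▸ firstBlock_unshuffle S
  · simp only [Finset.mem_filter, Finset.mem_univ, true_and] at hσ
    obtain ⟨S, rfl, rfl⟩ : ∃ S, unshuffle S = σ ∧ S.card = j :=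
      ⟨_, unshuffle_firstBlock hσ, card_firstBlock σ hjn⟩
    rw [firstBlock_unshuffle, map_take_unshuffle, map_drop_unshuffle, koszulSign_unshuffle]

end Shuffles

namespace LieSuper

variable (L : LieSuper k G)

theorem br_eq_neg_ksign_smul {i j : ZMod 2} {x y : G} (hx : x ∈ L.gr i) (hy : y ∈ L.gr j) :
    L.br x y = -ksign i j • L.br y x := by
  rw [L.skew i j x y hx hy, neg_smul]

theorem br_br_right {i j q : ZMod 2} {x y z : G} (hx : x ∈ L.gr i) (hy : y ∈ L.gr j)
    (hz : z ∈ L.gr q) :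
    L.br (L.br x y) z = ksign q j • L.br (L.br x z) y + L.br x (L.br y z) := by
  have hjac := L.jacobi i j x y z hx hy
  rw [L.br_eq_neg_ksign_smul hy (L.br_gr i q x z hx hz), smul_smul, mul_neg,
    ksign_mul_ksign_add, neg_smul] at hjac
  rw [hjac]
  abel

def iterBr (x : G) (l : List G) : G := l.foldl (fun u v => L.br u v) x

@[simp] theorem iterBr_nil (x : G) : L.iterBr x [] = x := rfl

@[simp] theorem iterBr_cons (x y : G) (l : List G) :
    L.iterBr x (y :: l) = L.iterBr (L.br x y) l := rfl

theorem iterBr_add (x y : G) (l : List G) :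
    L.iterBr (x + y) l = L.iterBr x l + L.iterBr y l := by
  induction l generalizing x y with
  | nil => rfl
  | cons z l ih => simp only [iterBr_cons, map_add, LinearMap.add_apply, ih]

theorem iterBr_zsmul (m : ℤ) (x : G) (l : List G) :
    L.iterBr (m • x) l = m • L.iterBr x l := by
  induction l generalizing x with
  | nil => rfl
  | cons z l ih => simp only [iterBr_cons, map_zsmul, LinearMap.smul_apply, ih]

theorem iterBr_zero (l : List G) : L.iterBr 0 l = 0 := by
  simpa using L.iterBr_zsmul 0 0 l

variable {ι : Type*} {a : ι → G} {p : ι → ZMod 2}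

theorem iterBr_mem_gr {x : G} {d : ZMod 2} (hx : x ∈ L.gr d) {l : List ι}
    (ha : ∀ i ∈ l, a i ∈ L.gr (p i)) :
    L.iterBr x (l.map a) ∈ L.gr (d + (l.map p).sum) := by
  induction l generalizing x d with
  | nil => simpa using hx
  | cons i l ih =>
    simpa [add_assoc] using ih (L.br_gr _ _ _ _ hx (ha i (by simp)))
      (fun j hj => ha j (by simp [hj]))

theorem iterBr_br_of_br_eq_zero {x b : G} {d e : ZMod 2} (hx : x ∈ L.gr d) (hb : b ∈ L.gr e)
    {l : List ι} (ha : ∀ i ∈ l, a i ∈ L.gr (p i)) (hba : ∀ i ∈ l, L.br b (a i) = 0) :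
    L.iterBr (L.br x b) (l.map a) = ksign e (l.map p).sum • L.br (L.iterBr x (l.map a)) b := by
  induction l generalizing x d with
  | nil => simp [ksign]
  | cons i l ih =>
    have hi : a i ∈ L.gr (p i) := ha i (by simp)
    have hswap : L.br (L.br x b) (a i) = ksign (p i) e • L.br (L.br x (a i)) b := by
      rw [L.br_br_right hx hb hi, hba i (by simp), map_zero, add_zero]
    rw [List.map_cons, iterBr_cons, hswap, iterBr_zsmul,
      ih (L.br_gr _ _ _ _ hx hi) (fun j hj => ha j (by simp [hj]))
        (fun j hj => hba j (by simp [hj])),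
      smul_smul, List.map_cons, List.sum_cons, ksign_add_right, ksign_comm (p i), iterBr_cons]

variable {n : ℕ}

def iterBrOn (x : G) (a : Fin n → G) (S : Finset (Fin n)) : G := L.iterBr x ((ascList S).map a)

theorem iterBrOn_mem_gr {a : Fin n → G} {p : Fin n → ZMod 2} (ha : ∀ i, a i ∈ L.gr (p i))
    {x : G} {d : ZMod 2} (hx : x ∈ L.gr d) (S : Finset (Fin n)) :
    L.iterBrOn x a S ∈ L.gr (d + ∑ i ∈ S, p i) := by
  rw [← sum_map_ascList]
  exact L.iterBr_mem_gr hx fun i _ => ha i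

theorem iterBr_br_ofFn {a : Fin n → G} {p : Fin n → ZMod 2}
    (ha : ∀ i, a i ∈ L.gr (p i)) {x y : G} {d e : ZMod 2} (hx : x ∈ L.gr d) (hy : y ∈ L.gr e) :
    L.iterBr (L.br x y) (List.ofFn a) = ∑ S, (ksign (∑ i ∈ S, p i) e * shuffleSign p S) •
      L.br (L.iterBrOn x a S) (L.iterBrOn y a Sᶜ) := by
  induction n generalizing x y d e with
  | zero =>
    rw [show (Finset.univ : Finset (Finset (Fin 0))) = {∅} from rfl, Finset.sum_singleton]
    simp [iterBrOn, ascList, shuffleSign, ksign]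
  | succ n ih =>
    rw [List.ofFn_succ, iterBr_cons, L.br_br_right hx hy (ha 0), iterBr_add, iterBr_zsmul,
      ih (fun i => ha i.succ) (L.br_gr _ _ _ _ hx (ha 0)) hy,
      ih (fun i => ha i.succ) hx (L.br_gr _ _ _ _ hy (ha 0)), sum_finset_fin_succ,
      Finset.smul_sum]
    congr 1 <;> refine Finset.sum_congr rfl fun S _ => ?_
    · simp only [iterBrOn]
      rw [ascList_insert_zero, compl_insert_zero_map_succEmb, ascList_map_succEmb,
        shuffleSign_insert_zero, Finset.sum_insert (by simp [Fin.succ_ne_zero]),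
        Finset.sum_map, ksign_add_left, smul_smul, mul_assoc]
      simp [List.map_map, Function.comp_def]
    · simp only [iterBrOn]
      rw [ascList_map_succEmb, compl_map_succEmb, ascList_insert_zero,
        shuffleSign_map_succEmb, Finset.sum_map, ksign_add_right, mul_assoc]
      simp [List.map_map, Function.comp_def]

end LieSuper

section DerivedBrackets

variable {L : LieSuper k G} {P : G →ₗ[k] G} {n : ℕ}

theorem proj_br_eq_add (hP : ∀ x, P (P x) = P x)
    (hker : ∀ x y, P x = 0 → P y = 0 → P (L.br x y) = 0)
    (habel : ∀ x y, L.br (P x) (P y) = 0) (x y : G) :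
    P (L.br x y) = P (L.br (P x) (y - P y)) + P (L.br (x - P x) (P y)) := by
  have hdecomp : L.br x y = L.br (P x) (P y) + L.br (P x) (y - P y) + L.br (x - P x) (P y)
      + L.br (x - P x) (y - P y) := by
    simp only [map_sub, LinearMap.sub_apply]
    abel
  have hx : P (x - P x) = 0 := by rw [map_sub, hP, sub_self]
  have hy : P (y - P y) = 0 := by rw [map_sub, hP, sub_self]
  rw [hdecomp, map_add, map_add, map_add, habel, map_zero, zero_add, hker _ _ hx hy, add_zero]

theorem dbr_cons_dbr_eq (hPgr : ∀ (i : ZMod 2) (x : G), x ∈ L.gr i → P x ∈ L.gr i)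
    (habel : ∀ x y, L.br (P x) (P y) = 0) {D : G} {d : ZMod 2} (hD : D ∈ L.gr d)
    {p : Fin n → ZMod 2} {a : Fin n → G} (ha : ∀ i, a i ∈ L.gr (p i) ∧ P (a i) = a i)
    (S : Finset (Fin n)) :
    dbr L P D (dbr L P D ((ascList S).map a) :: (ascList Sᶜ).map a)
      = ksign (d + ∑ i ∈ S, p i) (∑ i ∈ Sᶜ, p i) •
        P (L.br (L.iterBrOn D a Sᶜ - P (L.iterBrOn D a Sᶜ)) (P (L.iterBrOn D a S))) := by
  have hu := hPgr _ _ (L.iterBrOn_mem_gr (fun i => (ha i).1) hD S)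
  have hcomm : ∀ i ∈ ascList Sᶜ, L.br (P (L.iterBrOn D a S)) (a i) = 0 :=
    fun i _ => (ha i).2 ▸ habel _ _
  change P (L.iterBr (L.br D (P (L.iterBrOn D a S))) ((ascList Sᶜ).map a)) = _
  rw [L.iterBr_br_of_br_eq_zero hD hu (fun i _ => (ha i).1) hcomm, sum_map_ascList, map_zsmul,
    map_sub, LinearMap.sub_apply, habel, sub_zero]
  rfl

theorem jacobiator_eq_sum_proj_br_ker (hPgr : ∀ (i : ZMod 2) (x : G), x ∈ L.gr i → P x ∈ L.gr i)
    (habel : ∀ x y, L.br (P x) (P y) = 0) {D : G} (hD : D ∈ L.gr 1)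
    {p : Fin n → ZMod 2} {a : Fin n → G} (ha : ∀ i, a i ∈ L.gr (p i) ∧ P (a i) = a i) :
    jacobiator L P D p a = ∑ S, (ksign (∑ i ∈ S, p i) 1 * shuffleSign p S) •
      P (L.br (P (L.iterBrOn D a S)) (L.iterBrOn D a Sᶜ - P (L.iterBrOn D a Sᶜ))) := by
  rw [jacobiator_eq_sum_shuffleSign]
  refine Finset.sum_congr rfl fun S _ => ?_
  have hX := L.iterBrOn_mem_gr (fun i => (ha i).1) hD
  have hsign : ∀ s t : ZMod 2, ksign (1 + s) t * -ksign (1 + t) (1 + s) = ksign s 1 := by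
    decide
  rw [dbr_cons_dbr_eq hPgr habel hD ha, L.br_eq_neg_ksign_smul
    (Submodule.sub_mem _ (hX Sᶜ) (hPgr _ _ (hX Sᶜ))) (hPgr _ _ (hX S)), map_zsmul, smul_smul,
    smul_smul, ← hsign (∑ i ∈ S, p i) (∑ i ∈ Sᶜ, p i), mul_assoc, mul_comm]

theorem jacobiator_eq_sum_ker_br_proj (hPgr : ∀ (i : ZMod 2) (x : G), x ∈ L.gr i → P x ∈ L.gr i)
    (habel : ∀ x y, L.br (P x) (P y) = 0) {D : G} (hD : D ∈ L.gr 1)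
    {p : Fin n → ZMod 2} {a : Fin n → G} (ha : ∀ i, a i ∈ L.gr (p i) ∧ P (a i) = a i) :
    jacobiator L P D p a = ∑ S, (ksign (∑ i ∈ S, p i) 1 * shuffleSign p S) •
      P (L.br (L.iterBrOn D a S - P (L.iterBrOn D a S)) (P (L.iterBrOn D a Sᶜ))) := by
  rw [jacobiator_eq_sum_shuffleSign, ← Equiv.sum_comp (compl_involutive.toPerm _)]
  refine Finset.sum_congr rfl fun S _ => ?_
  have hsign : ∀ s t : ZMod 2, ksign s t * ksign (1 + t) s = ksign s 1 := by decide
  have hcompl : shuffleSign p Sᶜ = shuffleSign p S * ksign (∑ i ∈ S, p i) (∑ i ∈ Sᶜ, p i) := by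
    rw [← shuffleSign_mul_shuffleSign_compl, ← mul_assoc, shuffleSign_mul_self, one_mul]
  rw [Function.Involutive.coe_toPerm, dbr_cons_dbr_eq hPgr habel hD ha, compl_compl, smul_smul,
    hcompl, mul_assoc, hsign, mul_comm]

theorem sum_proj_br_iterBrOn_eq_zero {D : G} {d : ZMod 2} (hD : D ∈ L.gr d)
    (hD2 : L.br D D = 0) {p : Fin n → ZMod 2} {a : Fin n → G} (ha : ∀ i, a i ∈ L.gr (p i)) :
    ∑ S, (ksign (∑ i ∈ S, p i) d * shuffleSign p S) •
      P (L.br (L.iterBrOn D a S) (L.iterBrOn D a Sᶜ)) = 0 := by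
  have hleibniz := L.iterBr_br_ofFn ha hD hD
  rw [hD2, LieSuper.iterBr_zero, eq_comm] at hleibniz
  rw [← map_zero P, ← hleibniz, map_sum]
  simp only [map_zsmul]

end DerivedBrackets

/-- In the higher derived brackets setting, if `[Δ,Δ] = 0` then the
derived brackets of `Δ` endow `V = im P` with an `L∞`-algebra structure: all higher
Jacobi identities `Jⁿ = 0` hold. -/
theorem stmt11 [CharZero k] (L : LieSuper k G) (P : G →ₗ[k] G)
    (hP : ∀ x, P (P x) = P x)
    (hPgr : ∀ (i : ZMod 2) (x : G), x ∈ L.gr i → P x ∈ L.gr i)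
    (hker : ∀ x y, P x = 0 → P y = 0 → P (L.br x y) = 0)
    (habel : ∀ x y, L.br (P x) (P y) = 0)
    (D : G) (hD : D ∈ L.gr 1) (hD2 : L.br D D = 0)
    (n : ℕ) (p : Fin n → ZMod 2) (a : Fin n → G)
    (ha : ∀ i, a i ∈ L.gr (p i) ∧ P (a i) = a i) :
    jacobiator L P D p a = 0 := by
  have htwice : jacobiator L P D p a + jacobiator L P D p a = 0 := by
    nth_rw 1 [jacobiator_eq_sum_proj_br_ker hPgr habel hD ha]
    rw [jacobiator_eq_sum_ker_br_proj hPgr habel hD ha, ← Finset.sum_add_distrib,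
      ← sum_proj_br_iterBrOn_eq_zero hD hD2 fun i => (ha i).1]
    refine Finset.sum_congr rfl fun S _ => ?_
    rw [← smul_add, ← proj_br_eq_add hP hker habel]
  have htwo : (2 : k) • jacobiator L P D p a = 0 := by rw [two_smul, htwice]
  exact (smul_eq_zero.mp htwo).resolve_left two_ne_zero
end
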